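/- Let τ be an axiomatically consistent trace, let h be a handler, and let m₁ ≠ m₂ be two messages of h. If some event e₁ of m₁ and some event e₂ of m₂ satisfy e₁ hb e₂, then the get event of m₁ is eo-before the get event of m₂, and consequently every event of m₁ is eo†-before every event of m₂. -/
import Mathlib


/-!
Common framework for event-driven (ED) traces.

Handlers, shared variables and values are modelled as natural numbers;
events are (abstract) natural-number identifiers carrying a label.
-/

/-- Labels of events of event-driven programs: a read `⟨h,read,x⟩`, a write
`⟨h,write,x,v⟩`, a post `⟨h,post,h′⟩` or a get `⟨h,get⟩` of a handler `h`. -/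
inductive EventLabel : Type where
  | read  (h x : ℕ)
  | write (h x v : ℕ)
  | post  (h h' : ℕ)
  | get   (h : ℕ)
deriving DecidableEq

/-- The six basic relations of an ED trace. -/
inductive EDRel : Type where
  | po | rf | co | pb | mo | eo
deriving DecidableEq

/-- The handler of an event. -/
def EventLabel.hnd : EventLabel → ℕ
  | .read h _    => h
  | .write h _ _ => h
  | .post h _    => h
  | .get h       => h

def EventLabel.IsGet (l : EventLabel) : Prop := ∃ h, l = .get h
def EventLabel.IsPost (l : EventLabel) : Prop := ∃ h h', l = .post h h'
/-- `l` is a write event on variable `x`. -/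
def EventLabel.IsWriteTo (l : EventLabel) (x : ℕ) : Prop := ∃ h v, l = .write h x v
/-- `l` is a read event on variable `x`. -/
def EventLabel.IsReadOf (l : EventLabel) (x : ℕ) : Prop := ∃ h, l = .read h x
/-- `l` is a post event posting to handler `h'`. -/
def EventLabel.PostsTo (l : EventLabel) (h' : ℕ) : Prop := ∃ h, l = .post h h'

/-- An event-driven trace: a finite set `E` of events (natural-number
identifiers), a labelling of events, and a family of labelled edges. -/
structure EDTrace : Type where
  E : Finset ℕ
  lbl : ℕ → EventLabel
  rel : EDRel → ℕ → ℕ → Prop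

namespace EDTrace

/-- The from-read relation `fr = rf⁻¹ ; co`. -/
def fr (τ : EDTrace) (a b : ℕ) : Prop := ∃ w, τ.rel .rf w a ∧ τ.rel .co w b

/-- The queue order `qo = pb⁻¹ ; mo ; pb` on get events. -/
def qo (τ : EDTrace) (a b : ℕ) : Prop :=
  ∃ p q, τ.rel .pb p a ∧ τ.rel .pb q b ∧ τ.rel .mo p q

/-- `e` belongs to the (non-initial) message whose get event is `g`:
`g` is a get event and `e` is po-reachable from `g`. -/
def InMsg (τ : EDTrace) (g e : ℕ) : Prop :=
  (τ.lbl g).IsGet ∧ Relation.ReflTransGen (τ.rel .po) g e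

/-- `eo†`: every event of a message is related to every event of an
eo-later message of the same handler. -/
def eoDag (τ : EDTrace) (a b : ℕ) : Prop :=
  ∃ g g', τ.InMsg g a ∧ τ.InMsg g' b ∧ τ.rel .eo g g'

/-- One step of the happens-before relation:
`po ∪ rf ∪ fr ∪ co ∪ pb ∪ mo ∪ eo† ∪ qo`. -/
def step (τ : EDTrace) (a b : ℕ) : Prop :=
  τ.rel .po a b ∨ τ.rel .rf a b ∨ τ.fr a b ∨ τ.rel .co a b ∨
  τ.rel .pb a b ∨ τ.rel .mo a b ∨ τ.eoDag a b ∨ τ.qo a b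

/-- The happens-before relation: transitive closure of
`po ∪ rf ∪ fr ∪ co ∪ pb ∪ mo ∪ eo† ∪ qo`. -/
def hb (τ : EDTrace) : ℕ → ℕ → Prop := Relation.TransGen τ.step

/-- Axiomatic consistency: acyclicity of `po ∪ rf ∪ fr ∪ co ∪ pb ∪ mo ∪ eo† ∪ qo`. -/
def Consistent (τ : EDTrace) : Prop := ∀ e, ¬ τ.hb e e

/-- `e` belongs to the initial message of its handler: it belongs to no
message started by a get event. -/
def InInit (τ : EDTrace) (e : ℕ) : Prop :=
  e ∈ τ.E ∧ ¬ ∃ g ∈ τ.E, τ.InMsg g e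

/-- Two events belong to the same message (either the message of a common
get event, or both to the initial message of the same handler). -/
def SameMsg (τ : EDTrace) (a b : ℕ) : Prop :=
  (∃ g ∈ τ.E, τ.InMsg g a ∧ τ.InMsg g b) ∨
  (τ.InInit a ∧ τ.InInit b ∧ (τ.lbl a).hnd = (τ.lbl b).hnd)

/-- Well-formedness of the `po, rf, co, pb` components of a trace. -/
structure WFCore (τ : EDTrace) : Prop where
  edges_mem : ∀ r a b, τ.rel r a b → a ∈ τ.E ∧ b ∈ τ.E
  po_trans : Transitive (τ.rel .po)
  po_irrefl : ∀ a, ¬ τ.rel .po a a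
  po_same_handler : ∀ a b, τ.rel .po a b → (τ.lbl a).hnd = (τ.lbl b).hnd
  po_msg : ∀ a b, τ.rel .po a b → τ.SameMsg a b
  po_total : ∀ a ∈ τ.E, ∀ b ∈ τ.E, τ.SameMsg a b → a ≠ b →
    τ.rel .po a b ∨ τ.rel .po b a
  rf_lbl : ∀ a b, τ.rel .rf a b → ∃ x, (τ.lbl a).IsWriteTo x ∧ (τ.lbl b).IsReadOf x
  rf_unique : ∀ b ∈ τ.E, (∃ x, (τ.lbl b).IsReadOf x) → ∃! a, τ.rel .rf a b
  co_lbl : ∀ a b, τ.rel .co a b → ∃ x, (τ.lbl a).IsWriteTo x ∧ (τ.lbl b).IsWriteTo x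
  co_trans : Transitive (τ.rel .co)
  co_irrefl : ∀ a, ¬ τ.rel .co a a
  co_total : ∀ x, ∀ a ∈ τ.E, ∀ b ∈ τ.E, (τ.lbl a).IsWriteTo x → (τ.lbl b).IsWriteTo x →
    a ≠ b → τ.rel .co a b ∨ τ.rel .co b a
  pb_lbl : ∀ a b, τ.rel .pb a b → ∃ h h', τ.lbl a = .post h h' ∧ τ.lbl b = .get h'
  pb_get : ∀ b ∈ τ.E, (τ.lbl b).IsGet → ∃! a, τ.rel .pb a b
  pb_post : ∀ a ∈ τ.E, (τ.lbl a).IsPost → ∃! b, τ.rel .pb a b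

/-- Well-formedness of a (total) ED trace: additionally `mo` totally orders
the posts to each handler and `eo` totally orders the gets of each handler. -/
structure WF (τ : EDTrace) extends WFCore τ : Prop where
  mo_lbl : ∀ a b, τ.rel .mo a b → ∃ h', (τ.lbl a).PostsTo h' ∧ (τ.lbl b).PostsTo h'
  mo_trans : Transitive (τ.rel .mo)
  mo_irrefl : ∀ a, ¬ τ.rel .mo a a
  mo_total : ∀ h', ∀ a ∈ τ.E, ∀ b ∈ τ.E, (τ.lbl a).PostsTo h' → (τ.lbl b).PostsTo h' →
    a ≠ b → τ.rel .mo a b ∨ τ.rel .mo b a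
  eo_lbl : ∀ a b, τ.rel .eo a b → ∃ h, τ.lbl a = .get h ∧ τ.lbl b = .get h
  eo_trans : Transitive (τ.rel .eo)
  eo_irrefl : ∀ a, ¬ τ.rel .eo a a
  eo_total : ∀ h, ∀ a ∈ τ.E, ∀ b ∈ τ.E, τ.lbl a = .get h → τ.lbl b = .get h →
    a ≠ b → τ.rel .eo a b ∨ τ.rel .eo b a

/-- A partial trace: the `eo` and `mo` components are omitted (empty). -/
def IsPartial (τ : EDTrace) : Prop :=
  (∀ a b, ¬ τ.rel .eo a b) ∧ (∀ a b, ¬ τ.rel .mo a b)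

/-- `τ'` extends the (partial) trace `τ`: same events, labels and
`po, rf, co, pb` edges; only `eo` and `mo` may be added. -/
def Extends (τ' τ : EDTrace) : Prop :=
  τ'.E = τ.E ∧ τ'.lbl = τ.lbl ∧ τ'.rel .po = τ.rel .po ∧ τ'.rel .rf = τ.rel .rf ∧
  τ'.rel .co = τ.rel .co ∧ τ'.rel .pb = τ.rel .pb

/-- ED-consistency of a partial trace: it can be extended, by adding `eo`
edges (total per handler) and `mo` edges (total per target handler), to a
well-formed axiomatically consistent trace. -/
def EDConsistent (τ : EDTrace) : Prop :=
  ∃ τ' : EDTrace, Extends τ' τ ∧ τ'.WF ∧ τ'.Consistent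

end EDTrace

/-- Let `τ` be a well-formed axiomatically consistent trace,
`h` a handler, and `m₁ ≠ m₂` two messages of `h` with get events `g₁ ≠ g₂`.
If some event `e₁` of `m₁` and some event `e₂` of `m₂` satisfy `e₁ hb e₂`,
then `g₁ eo g₂`, and consequently every event of `m₁` is `eo†`-before every
event of `m₂`. -/
theorem statement8 (τ : EDTrace) (hwf : τ.WF) (hcons : τ.Consistent)
    (g₁ g₂ : ℕ) (hg₁ : g₁ ∈ τ.E) (hg₂ : g₂ ∈ τ.E) (hne : g₁ ≠ g₂)
    (hsame : (τ.lbl g₁).hnd = (τ.lbl g₂).hnd)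
    (hget₁ : (τ.lbl g₁).IsGet) (hget₂ : (τ.lbl g₂).IsGet)
    (e₁ e₂ : ℕ) (he₁ : τ.InMsg g₁ e₁) (he₂ : τ.InMsg g₂ e₂)
    (hhb : τ.hb e₁ e₂) :
    τ.rel .eo g₁ g₂ ∧ ∀ a b, τ.InMsg g₁ a → τ.InMsg g₂ b → τ.eoDag a b := by
  obtain ⟨h₁, hl₁⟩ := hget₁
  obtain ⟨h₂, hl₂⟩ := hget₂
  have hh : h₁ = h₂ := by
    have := hsame; rw [hl₁, hl₂] at this; exact this
  subst hh
  have heo : τ.rel .eo g₁ g₂ := by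
    rcases hwf.eo_total h₁ g₁ hg₁ g₂ hg₂ hl₁ hl₂ hne with h | h
    · exact h
    · exfalso
      have hstep : τ.step e₂ e₁ := by
        refine Or.inr (Or.inr (Or.inr (Or.inr (Or.inr (Or.inr (Or.inl ?_))))))
        exact ⟨g₂, g₁, he₂, he₁, h⟩
      exact hcons e₁ (Relation.TransGen.tail hhb hstep)
  exact ⟨heo, fun a b ha hb => ⟨g₁, g₂, ha, hb, heo⟩⟩
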